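/- arXiv:math/0605208 — 2 statements merged into one kernel-verified Lean document; each statement's English description precedes it below -/
import Mathlib

section
/- Let 0 < q < 1, 0 < a < b, and let f, g : [0,b] → ℝ be increasing with Lipschitz-type bounds as above (positive constants l_f ≤ slopes of f ≤ L_f, l_g ≤ slopes of g ≤ L_g, with a²/b² ≤ l_f/L_f and a²/b² ≤ l_g/L_g). Then I_q(fg;a,b) ≥ (1/(b−a))·I_q(f;a,b)·I_q(g;a,b) − (ab/(b−a))·(f(b)−f(0))·(g(b)−g(0)). -/
open Set

/-!
Let `⟨h⟩_c = (1 - q) ∑ q ^ n h (c q ^ n)` (`jacksonAverage q c h`) be the mean of `h` against the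
probability weights `(1 - q) q ^ n` at the nodes `c q ^ n`, so that `I_q(h; 0, c) = c ⟨h⟩_c`.
Expanding the double sum
`∑_{m,n} (1 - q)² q ^ (m + n) (f (c q ^ m) - f (d q ^ n)) (g (c q ^ m) - g (d q ^ n))` gives
`⟨fg⟩_c + ⟨fg⟩_d - ⟨f⟩_c ⟨g⟩_d - ⟨g⟩_c ⟨f⟩_d`. For `c = d` its summands are nonnegative because
`f` and `g` are both increasing (Chebyshev's inequality `⟨f⟩_c ⟨g⟩_c ≤ ⟨fg⟩_c`); for `c = b`,
`d = a` they are at most `(f b - f 0) (g b - g 0)` times the weight. Multiplied by `b - a`, the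
difference of the two sides is the sum of `b² (⟨fg⟩_b - ⟨f⟩_b ⟨g⟩_b)`, `a² (⟨fg⟩_a - ⟨f⟩_a ⟨g⟩_a)` and `ab` times the
slack in the second bound.
-/

section WeightedSums

variable {w v x y x' y' : ℕ → ℝ} {X Y P X' Y' P' : ℝ}

theorem hasSum_mul_sub_mul_sub (hv : HasSum v 1) (hx : HasSum (v * x) X) (hy : HasSum (v * y) Y)
    (hxy : HasSum (v * (x * y)) P) (s t : ℝ) :
    HasSum (fun n => v n * ((s - x n) * (t - y n))) (s * t - s * Y - t * X + P) := by
  have h := (((hv.mul_left (s * t)).sub (hy.mul_left s)).sub (hx.mul_left t)).add hxy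
  rw [mul_one] at h
  exact h.congr_fun fun n => by simp only [Pi.mul_apply]; ring

theorem hasSum_mul_tsum_mul_sub_mul_sub (hw : HasSum w 1) (hx : HasSum (w * x) X)
    (hy : HasSum (w * y) Y) (hxy : HasSum (w * (x * y)) P) (hv : HasSum v 1)
    (hx' : HasSum (v * x') X') (hy' : HasSum (v * y') Y') (hxy' : HasSum (v * (x' * y')) P') :
    HasSum (fun m => w m * ∑' n, v n * ((x m - x' n) * (y m - y' n)))
      (P - X * Y' - Y * X' + P') := by
  have h := ((hxy.sub (hx.mul_right Y')).sub (hy.mul_right X')).add (hw.mul_right P')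
  rw [one_mul] at h
  exact h.congr_fun fun m => by
    simp only [(hasSum_mul_sub_mul_sub hv hx' hy' hxy' (x m) (y m)).tsum_eq, Pi.mul_apply]
    ring

theorem mul_add_mul_le_add_of_forall_nonneg (hw0 : ∀ m, 0 ≤ w m) (hv0 : ∀ n, 0 ≤ v n)
    (hw : HasSum w 1) (hx : HasSum (w * x) X) (hy : HasSum (w * y) Y)
    (hxy : HasSum (w * (x * y)) P) (hv : HasSum v 1) (hx' : HasSum (v * x') X')
    (hy' : HasSum (v * y') Y') (hxy' : HasSum (v * (x' * y')) P')
    (H : ∀ m n, 0 ≤ (x m - x' n) * (y m - y' n)) :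
    X * Y' + Y * X' ≤ P + P' := by
  have := (hasSum_mul_tsum_mul_sub_mul_sub hw hx hy hxy hv hx' hy' hxy').nonneg fun m =>
    mul_nonneg (hw0 m) (tsum_nonneg fun n => mul_nonneg (hv0 n) (H m n))
  linarith

theorem add_le_mul_add_mul_add_of_forall_le {K : ℝ} (hw0 : ∀ m, 0 ≤ w m) (hv0 : ∀ n, 0 ≤ v n)
    (hw : HasSum w 1) (hx : HasSum (w * x) X) (hy : HasSum (w * y) Y)
    (hxy : HasSum (w * (x * y)) P) (hv : HasSum v 1) (hx' : HasSum (v * x') X')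
    (hy' : HasSum (v * y') Y') (hxy' : HasSum (v * (x' * y')) P')
    (H : ∀ m n, (x m - x' n) * (y m - y' n) ≤ K) :
    P + P' ≤ X * Y' + Y * X' + K := by
  have hinner : ∀ m, ∑' n, v n * ((x m - x' n) * (y m - y' n)) ≤ K := fun m => by
    have hsum := hasSum_mul_sub_mul_sub hv hx' hy' hxy' (x m) (y m)
    rw [hsum.tsum_eq]
    simpa using hasSum_le (fun n => mul_le_mul_of_nonneg_left (H m n) (hv0 n)) hsum
      (hv.mul_right K)
  have := hasSum_le (fun m => mul_le_mul_of_nonneg_left (hinner m) (hw0 m))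
    (hasSum_mul_tsum_mul_sub_mul_sub hw hx hy hxy hv hx' hy' hxy') (hw.mul_right K)
  linarith

end WeightedSums

section Monotone

variable {f g : ℝ → ℝ} {s : Set ℝ} {lo hi x y : ℝ}

theorem MonotoneOn.sub_mul_sub_nonneg (hf : MonotoneOn f s) (hg : MonotoneOn g s) (hx : x ∈ s)
    (hy : y ∈ s) : 0 ≤ (f x - f y) * (g x - g y) := by
  rcases le_total x y with hxy | hyx
  · exact mul_nonneg_of_nonpos_of_nonpos (sub_nonpos.2 (hf hx hy hxy)) (sub_nonpos.2 (hg hx hy hxy))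
  · exact mul_nonneg (sub_nonneg.2 (hf hy hx hyx)) (sub_nonneg.2 (hg hy hx hyx))

theorem MonotoneOn.abs_le_max_abs (hf : MonotoneOn f (Icc lo hi)) (hx : x ∈ Icc lo hi) :
    |f x| ≤ max |f lo| |f hi| :=
  abs_le_max_abs_abs (hf.mapsTo_Icc hx).1 (hf.mapsTo_Icc hx).2

theorem MonotoneOn.sub_mul_sub_le (hf : MonotoneOn f (Icc lo hi)) (hg : MonotoneOn g (Icc lo hi))
    (hx : x ∈ Icc lo hi) (hy : y ∈ Icc lo hi) :
    (f x - f y) * (g x - g y) ≤ (f hi - f lo) * (g hi - g lo) := by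
  obtain ⟨hfx₁, hfx₂⟩ := hf.mapsTo_Icc hx
  obtain ⟨hfy₁, hfy₂⟩ := hf.mapsTo_Icc hy
  obtain ⟨hgx₁, hgx₂⟩ := hg.mapsTo_Icc hx
  obtain ⟨hgy₁, hgy₂⟩ := hg.mapsTo_Icc hy
  have hdf := abs_sub_le_of_le_of_le hfx₁ hfx₂ hfy₁ hfy₂
  calc (f x - f y) * (g x - g y) ≤ |f x - f y| * |g x - g y| := by
        rw [← abs_mul]; exact le_abs_self _
    _ ≤ (f hi - f lo) * (g hi - g lo) :=
        mul_le_mul hdf (abs_sub_le_of_le_of_le hgx₁ hgx₂ hgy₁ hgy₂) (abs_nonneg _)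
          ((abs_nonneg _).trans hdf)

end Monotone

section Jackson

noncomputable def jacksonAverage (q c : ℝ) (h : ℝ → ℝ) : ℝ :=
  (1 - q) * ∑' n : ℕ, h (c * q ^ n) * q ^ n

variable {q b c d C : ℝ} {f g h : ℝ → ℝ}

theorem one_sub_mul_pow_nonneg (hq0 : 0 ≤ q) (hq1 : q ≤ 1) (n : ℕ) : 0 ≤ (1 - q) * q ^ n :=
  mul_nonneg (sub_nonneg.2 hq1) (pow_nonneg hq0 n)

theorem hasSum_one_sub_mul_pow (hq0 : 0 ≤ q) (hq1 : q < 1) :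
    HasSum (fun n : ℕ => (1 - q) * q ^ n) 1 := by
  simpa [mul_inv_cancel₀ (sub_ne_zero.2 hq1.ne')] using
    (hasSum_geometric_of_lt_one hq0 hq1).mul_left (1 - q)

theorem hasSum_jacksonAverage_of_abs_le (hq0 : 0 ≤ q) (hq1 : q < 1) (hh : ∀ n : ℕ, |h (c * q ^ n)| ≤ C) :
    HasSum (fun n : ℕ => (1 - q) * q ^ n * h (c * q ^ n)) (jacksonAverage q c h) := by
  have hsum : Summable fun n : ℕ => h (c * q ^ n) * q ^ n := by
    refine .of_norm_bounded ((summable_geometric_of_lt_one hq0 hq1).mul_left C) fun n => ?_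
    rw [Real.norm_eq_abs, abs_mul, abs_of_nonneg (pow_nonneg hq0 n)]
    exact mul_le_mul_of_nonneg_right (hh n) (pow_nonneg hq0 n)
  exact (hsum.hasSum.mul_left (1 - q)).congr_fun fun n => by ring

theorem mul_pow_mem_Icc (hq0 : 0 ≤ q) (hq1 : q < 1) (hc : c ∈ Icc 0 b) (n : ℕ) :
    c * q ^ n ∈ Icc 0 b :=
  ⟨mul_nonneg hc.1 (pow_nonneg hq0 n),
    (mul_le_of_le_one_right hc.1 (pow_le_one₀ hq0 hq1.le)).trans hc.2⟩

theorem MonotoneOn.hasSum_jacksonAverage (hq0 : 0 ≤ q) (hq1 : q < 1)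
    (hf : MonotoneOn f (Icc 0 b)) (hc : c ∈ Icc 0 b) :
    HasSum (fun n : ℕ => (1 - q) * q ^ n * f (c * q ^ n)) (jacksonAverage q c f) :=
  hasSum_jacksonAverage_of_abs_le hq0 hq1 fun n => hf.abs_le_max_abs (mul_pow_mem_Icc hq0 hq1 hc n)

theorem MonotoneOn.hasSum_jacksonAverage_mul (hq0 : 0 ≤ q) (hq1 : q < 1)
    (hf : MonotoneOn f (Icc 0 b)) (hg : MonotoneOn g (Icc 0 b)) (hc : c ∈ Icc 0 b) :
    HasSum (fun n : ℕ => (1 - q) * q ^ n * (f (c * q ^ n) * g (c * q ^ n)))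
      (jacksonAverage q c (f * g)) :=
  hasSum_jacksonAverage_of_abs_le hq0 hq1 fun n => by
    have hfn := hf.abs_le_max_abs (mul_pow_mem_Icc hq0 hq1 hc n)
    rw [Pi.mul_apply, abs_mul]
    exact mul_le_mul hfn (hg.abs_le_max_abs (mul_pow_mem_Icc hq0 hq1 hc n)) (abs_nonneg _)
      ((abs_nonneg _).trans hfn)

theorem jacksonAverage_mul_le (hq0 : 0 ≤ q) (hq1 : q < 1) (hf : MonotoneOn f (Icc 0 b))
    (hg : MonotoneOn g (Icc 0 b)) (hc : c ∈ Icc 0 b) :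
    jacksonAverage q c f * jacksonAverage q c g ≤ jacksonAverage q c (f * g) := by
  have hF := hf.hasSum_jacksonAverage hq0 hq1 hc
  have hG := hg.hasSum_jacksonAverage hq0 hq1 hc
  have hFG := hf.hasSum_jacksonAverage_mul hq0 hq1 hg hc
  have hw0 := one_sub_mul_pow_nonneg hq0 hq1.le
  have := mul_add_mul_le_add_of_forall_nonneg hw0 hw0 (hasSum_one_sub_mul_pow hq0 hq1)
    hF hG hFG (hasSum_one_sub_mul_pow hq0 hq1) hF hG hFG fun m n =>
      hf.sub_mul_sub_nonneg hg (mul_pow_mem_Icc hq0 hq1 hc m) (mul_pow_mem_Icc hq0 hq1 hc n)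
  linarith

theorem jacksonAverage_mul_add_le (hq0 : 0 ≤ q) (hq1 : q < 1) (hf : MonotoneOn f (Icc 0 b))
    (hg : MonotoneOn g (Icc 0 b)) (hc : c ∈ Icc 0 b) (hd : d ∈ Icc 0 b) :
    jacksonAverage q c (f * g) + jacksonAverage q d (f * g) ≤
      jacksonAverage q c f * jacksonAverage q d g + jacksonAverage q c g * jacksonAverage q d f +
        (f b - f 0) * (g b - g 0) := by
  have hw0 := one_sub_mul_pow_nonneg hq0 hq1.le
  exact add_le_mul_add_mul_add_of_forall_le hw0 hw0 (hasSum_one_sub_mul_pow hq0 hq1)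
    (hf.hasSum_jacksonAverage hq0 hq1 hc) (hg.hasSum_jacksonAverage hq0 hq1 hc)
    (hf.hasSum_jacksonAverage_mul hq0 hq1 hg hc) (hasSum_one_sub_mul_pow hq0 hq1)
    (hf.hasSum_jacksonAverage hq0 hq1 hd) (hg.hasSum_jacksonAverage hq0 hq1 hd)
    (hf.hasSum_jacksonAverage_mul hq0 hq1 hg hd) fun m n =>
      hf.sub_mul_sub_le hg (mul_pow_mem_Icc hq0 hq1 hc m) (mul_pow_mem_Icc hq0 hq1 hd n)

end Jackson

theorem q_chebyshev_correction_b_general (q a b : ℝ) (f g : ℝ → ℝ)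
    (hq0 : 0 < q) (hq1 : q < 1) (ha : 0 < a) (hab : a < b)
    (hfmono : MonotoneOn f (Icc 0 b)) (hgmono : MonotoneOn g (Icc 0 b)) :
    (b * (1 - q) * ∑' n : ℕ, f (b * q ^ n) * g (b * q ^ n) * q ^ n) -
        (a * (1 - q) * ∑' n : ℕ, f (a * q ^ n) * g (a * q ^ n) * q ^ n) ≥
      (1 / (b - a)) *
          ((b * (1 - q) * ∑' n : ℕ, f (b * q ^ n) * q ^ n) -
            (a * (1 - q) * ∑' n : ℕ, f (a * q ^ n) * q ^ n)) *
          ((b * (1 - q) * ∑' n : ℕ, g (b * q ^ n) * q ^ n) -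
            (a * (1 - q) * ∑' n : ℕ, g (a * q ^ n) * q ^ n)) -
        (a * b / (b - a)) * (f b - f 0) * (g b - g 0) := by
  have hbI : b ∈ Icc 0 b := right_mem_Icc.2 (ha.trans hab).le
  have haI : a ∈ Icc 0 b := ⟨ha.le, hab.le⟩
  have hcheb_b := jacksonAverage_mul_le hq0.le hq1 hfmono hgmono hbI
  have hcheb_a := jacksonAverage_mul_le hq0.le hq1 hfmono hgmono haI
  have hcross := jacksonAverage_mul_add_le hq0.le hq1 hfmono hgmono hbI haI
  simp only [jacksonAverage, Pi.mul_apply] at hcheb_b hcheb_a hcross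
  rw [ge_iff_le, show ∀ X Y U V : ℝ, 1 / (b - a) * X * Y - a * b / (b - a) * U * V =
    (X * Y - a * b * U * V) / (b - a) from fun _ _ _ _ => by ring, div_le_iff₀ (sub_pos.2 hab)]
  have hab0 : 0 ≤ a * b := mul_nonneg ha.le (ha.trans hab).le
  linear_combination b ^ 2 * hcheb_b + a ^ 2 * hcheb_a + a * b * hcross

/-- Chebyshev-type bound for `I_q(·;a,b)` with correction term
`(ab/(b−a))·(f(b)−f(0))·(g(b)−g(0))`. -/
theorem q_chebyshev_correction_b (q a b lf Lf lg Lg : ℝ) (f g : ℝ → ℝ)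
    (hq0 : 0 < q) (hq1 : q < 1) (ha : 0 < a) (hab : a < b)
    (hlf : 0 < lf) (hLf : 0 < Lf) (hlg : 0 < lg) (hLg : 0 < Lg)
    (hrf : a ^ 2 / b ^ 2 ≤ lf / Lf) (hrg : a ^ 2 / b ^ 2 ≤ lg / Lg)
    (hfmono : MonotoneOn f (Icc 0 b)) (hgmono : MonotoneOn g (Icc 0 b))
    (hslopef : ∀ x ∈ Icc (0:ℝ) b, ∀ y ∈ Icc (0:ℝ) b, x ≠ y →
      lf ≤ (f x - f y) / (x - y) ∧ (f x - f y) / (x - y) ≤ Lf)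
    (hslopeg : ∀ x ∈ Icc (0:ℝ) b, ∀ y ∈ Icc (0:ℝ) b, x ≠ y →
      lg ≤ (g x - g y) / (x - y) ∧ (g x - g y) / (x - y) ≤ Lg) :
    (b * (1 - q) * ∑' n : ℕ, f (b * q ^ n) * g (b * q ^ n) * q ^ n) -
        (a * (1 - q) * ∑' n : ℕ, f (a * q ^ n) * g (a * q ^ n) * q ^ n) ≥
      (1 / (b - a)) *
          ((b * (1 - q) * ∑' n : ℕ, f (b * q ^ n) * q ^ n) -
            (a * (1 - q) * ∑' n : ℕ, f (a * q ^ n) * q ^ n)) *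
          ((b * (1 - q) * ∑' n : ℕ, g (b * q ^ n) * q ^ n) -
            (a * (1 - q) * ∑' n : ℕ, g (a * q ^ n) * q ^ n)) -
        (a * b / (b - a)) * (f b - f 0) * (g b - g 0) :=
  q_chebyshev_correction_b_general q a b f g hq0 hq1 ha hab hfmono hgmono
end

section
/- Let 0 < q < 1, b > 0, n ∈ ℕ⁺, a = b q^n, and f : [a,b] → ℝ convex. Then f((a+b)/(1+q)) ≤ (1/(b−a))·G_q(f;a,b) ≤ (1/(1+q))·(q·f(a/q) + f(b)), where G_q(f;a,b) = b(1−q)∑_{k=0}^{n−1} f(b q^k) q^k. -/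
/-!
The normalised restricted `q`-integral `(b - a)⁻¹ G_q(f; a, b)` is the mean of `f` against the
probability weights `(1 - q) q^k / (1 - q^n)` at the nodes `b q^k`, `k < n`, whose barycentre is
`(a + b) / (1 + q)`. Jensen's inequality gives the left bound. All nodes lie in `[a / q, b]`, and
`(a + b) / (1 + q)` divides that interval in the ratio `1 : q`, so the Lah–Ribarič inequality
(a convex function's mean over points of `[x, y]` is at most the chord evaluated at their
barycentre) gives the right bound.
-/

open scoped BigOperators
open Set

theorem ConvexOn.sub_mul_le_of_mem_Icc {f : ℝ → ℝ} {x y p : ℝ} (hf : ConvexOn ℝ (Icc x y) f)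
    (hp : p ∈ Icc x y) : (y - x) * f p ≤ (y - p) * f x + (p - x) * f y := by
  obtain ⟨hxp, hpy⟩ := hp
  rcases (hxp.trans hpy).eq_or_lt with rfl | hxy
  · obtain rfl := le_antisymm hpy hxp
    simp
  have hyx : 0 < y - x := sub_pos.2 hxy
  have key := hf.2 (left_mem_Icc.2 hxy.le) (right_mem_Icc.2 hxy.le)
    (div_nonneg (sub_nonneg.2 hpy) hyx.le) (div_nonneg (sub_nonneg.2 hxp) hyx.le)
    (by rw [← add_div, div_eq_one_iff_eq hyx.ne']; ring)
  have hcomb : ((y - p) / (y - x)) • x + ((p - x) / (y - x)) • y = p := by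
    simp only [smul_eq_mul]; field_simp; ring
  rw [hcomb, smul_eq_mul, smul_eq_mul] at key
  calc (y - x) * f p ≤ (y - x) * ((y - p) / (y - x) * f x + (p - x) / (y - x) * f y) :=
        mul_le_mul_of_nonneg_left key hyx.le
    _ = (y - p) * f x + (p - x) * f y := by field_simp

theorem ConvexOn.sum_le_of_mem_Icc {ι : Type*} {f : ℝ → ℝ} {x y μ ν : ℝ} {t : Finset ι}
    {w p : ι → ℝ} (hf : ConvexOn ℝ (Icc x y) f) (hw₀ : ∀ i ∈ t, 0 ≤ w i)
    (hw₁ : ∑ i ∈ t, w i = 1) (hp : ∀ i ∈ t, p i ∈ Icc x y) (hμν : μ + ν = 1)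
    (hmean : ∑ i ∈ t, w i • p i = μ * x + ν * y) :
    ∑ i ∈ t, w i • f (p i) ≤ μ * f x + ν * f y := by
  obtain ⟨i₀, hi₀⟩ := Finset.nonempty_of_sum_ne_zero (hw₁.trans_ne one_ne_zero)
  rcases ((hp i₀ hi₀).1.trans (hp i₀ hi₀).2).eq_or_lt with rfl | hxy
  · have hpx : ∀ i ∈ t, p i = x := fun i hi => le_antisymm (hp i hi).2 (hp i hi).1
    rw [Finset.sum_congr rfl fun i hi => by rw [hpx i hi], ← Finset.sum_smul, hw₁, one_smul,
      ← add_mul, hμν, one_mul]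
  refine le_of_mul_le_mul_left ?_ (sub_pos.2 hxy)
  calc (y - x) * ∑ i ∈ t, w i • f (p i)
      = ∑ i ∈ t, w i * ((y - x) * f (p i)) := by
        rw [Finset.mul_sum]; exact Finset.sum_congr rfl fun i _ => by rw [smul_eq_mul]; ring
    _ ≤ ∑ i ∈ t, w i * ((y - p i) * f x + (p i - x) * f y) :=
        Finset.sum_le_sum fun i hi =>
          mul_le_mul_of_nonneg_left (hf.sub_mul_le_of_mem_Icc (hp i hi)) (hw₀ i hi)
    _ = (y * ∑ i ∈ t, w i - ∑ i ∈ t, w i • p i) * f x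
          + (∑ i ∈ t, w i • p i - x * ∑ i ∈ t, w i) * f y := by
        simp only [Finset.mul_sum, ← Finset.sum_sub_distrib, Finset.sum_mul,
          ← Finset.sum_add_distrib, smul_eq_mul]
        exact Finset.sum_congr rfl fun i _ => by ring
    _ = (y - x) * (μ * f x + ν * f y) := by
        rw [hw₁, hmean, ← hμν]; ring

theorem mul_pow_mem_Icc_s12 {b q : ℝ} {k m : ℕ} (hb : 0 ≤ b) (hq₀ : 0 ≤ q) (hq₁ : q ≤ 1)
    (hkm : k ≤ m) : b * q ^ k ∈ Icc (b * q ^ m) b :=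
  ⟨mul_le_mul_of_nonneg_left (pow_le_pow_of_le_one hq₀ hq₁ hkm) hb,
    mul_le_of_le_one_right hb (pow_le_one₀ hq₀ hq₁)⟩

/-- The probability weights of the restricted `q`-integral: `G_q(f; b q^n, b)` equals
`(b - b q^n) * ∑ k < n, qWeight q n k * f (b q^k)`. -/
noncomputable def qWeight (q : ℝ) (n k : ℕ) : ℝ := (1 - q) * q ^ k / (1 - q ^ n)

theorem qWeight_nonneg {q : ℝ} (hq₀ : 0 ≤ q) (hq₁ : q ≤ 1) (n k : ℕ) : 0 ≤ qWeight q n k :=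
  div_nonneg (mul_nonneg (sub_nonneg.2 hq₁) (pow_nonneg hq₀ k))
    (sub_nonneg.2 (pow_le_one₀ hq₀ hq₁))

theorem sum_qWeight {q : ℝ} {n : ℕ} (hqn : q ^ n ≠ 1) :
    ∑ k ∈ Finset.range n, qWeight q n k = 1 := by
  simp only [qWeight]
  rw [← Finset.sum_div, ← Finset.mul_sum, mul_comm, geom_sum_mul_neg,
    div_self (sub_ne_zero.2 hqn.symm)]

theorem sum_qWeight_smul_mul_pow {q : ℝ} {n : ℕ} (b : ℝ) (hqn : q ^ n ≠ 1) (hq : 1 + q ≠ 0) :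
    ∑ k ∈ Finset.range n, qWeight q n k • (b * q ^ k) = (b * q ^ n + b) / (1 + q) := by
  have hgeom := geom_sum_mul_neg (q ^ 2) n
  have hqn' : 1 - q ^ n ≠ 0 := sub_ne_zero.2 hqn.symm
  calc ∑ k ∈ Finset.range n, qWeight q n k • (b * q ^ k)
      = b * (1 - q) * (∑ k ∈ Finset.range n, (q ^ 2) ^ k) / (1 - q ^ n) := by
        rw [Finset.mul_sum, Finset.sum_div]
        exact Finset.sum_congr rfl fun k _ => by rw [qWeight, smul_eq_mul]; ring
    _ = (b * q ^ n + b) / (1 + q) := by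
        rw [div_eq_div_iff hqn' hq]
        linear_combination b * hgeom

theorem sum_qWeight_smul_eq {q b : ℝ} {n : ℕ} (g : ℝ → ℝ) (hb : b ≠ 0) (hqn : q ^ n ≠ 1) :
    ∑ k ∈ Finset.range n, qWeight q n k • g (b * q ^ k) =
      1 / (b - b * q ^ n) * (b * (1 - q) * ∑ k ∈ Finset.range n, g (b * q ^ k) * q ^ k) := by
  have hqn' : 1 - q ^ n ≠ 0 := sub_ne_zero.2 hqn.symm
  rw [Finset.mul_sum, Finset.mul_sum]
  refine Finset.sum_congr rfl fun k _ => ?_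
  rw [qWeight, smul_eq_mul, ← mul_one_sub]
  field_simp

/-- q-Hermite–Hadamard inequality for the restricted q-integral. -/
theorem q_hermite_hadamard_Gq (q b : ℝ) (n : ℕ) (f : ℝ → ℝ) (a : ℝ)
    (hq0 : 0 < q) (hq1 : q < 1) (hb : 0 < b) (hn : 0 < n) (ha : a = b * q ^ n)
    (hconv : ConvexOn ℝ (Icc a b) f) :
    f ((a + b) / (1 + q)) ≤
        (1 / (b - a)) * (b * (1 - q) * ∑ k ∈ Finset.range n, f (b * q ^ k) * q ^ k) ∧
      (1 / (b - a)) * (b * (1 - q) * ∑ k ∈ Finset.range n, f (b * q ^ k) * q ^ k) ≤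
        (1 / (1 + q)) * (q * f (a / q) + f b) := by
  obtain ⟨m, rfl⟩ : ∃ m, n = m + 1 := Nat.exists_eq_add_one.2 hn
  subst ha
  have hqn : q ^ (m + 1) ≠ 1 := (pow_lt_one₀ hq0.le hq1 m.succ_ne_zero).ne
  have hq : 1 + q ≠ 0 := by positivity
  have hleft : b * q ^ (m + 1) / q = b * q ^ m := by
    rw [pow_succ, ← mul_assoc, mul_div_cancel_right₀ _ hq0.ne']
  have hmean := sum_qWeight_smul_mul_pow b hqn hq
  have hmem : ∀ k ∈ Finset.range (m + 1), b * q ^ k ∈ Icc (b * q ^ m) b := fun k hk =>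
    mul_pow_mem_Icc_s12 hb.le hq0.le hq1.le (Nat.lt_succ_iff.1 (Finset.mem_range.1 hk))
  have hsub : Icc (b * q ^ m) b ⊆ Icc (b * q ^ (m + 1)) b :=
    Icc_subset_Icc_left (mul_pow_mem_Icc_s12 hb.le hq0.le hq1.le m.le_succ).1
  rw [← sum_qWeight_smul_eq f hb.ne' hqn, hleft]
  constructor
  · exact hmean ▸ hconv.map_sum_le (fun k _ => qWeight_nonneg hq0.le hq1.le _ _)
      (sum_qWeight hqn) fun k hk => hsub (hmem k hk)
  · refine ((hconv.subset hsub (convex_Icc _ _)).sum_le_of_mem_Icc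
      (fun k _ => qWeight_nonneg hq0.le hq1.le _ _) (sum_qWeight hqn) hmem
      (μ := q / (1 + q)) (ν := 1 / (1 + q)) (by field_simp; ring) ?_).trans_eq (by ring)
    rw [hmean]
    field_simp
    ring
end
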